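/- Let λ ∈ ℂ ∪ {∞}, let X denote either A or B, and let W_X(λ) be the Lie algebra defined below with basis {L_n, X_n : n ∈ ℤ}. Then every symmetric invariant bilinear form θ on W_X(λ) satisfies: θ(L_n, L_m) = 0 for all n, m ∈ ℤ; θ(L_n, X_m) = 0 whenever n + m ≠ 0; and θ(X_n, X_m) = 0 for all (n, m) ∈ ℤ² with (n, m) ≠ (0, 0). -/

import Mathlib

/-!
The element `L₀` acts diagonally: `ad L₀` scales `L_m` and `X_m` by `m`, and `L_n` is scaled by `-n`
under `⁅·, L₀⁆`. Invariance then gives `(n + m) θ(L_n, L_m) = 0` and `(n + m) θ(L_n, X_m) = 0`, and,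
since the `X_m` commute, `n θ(X_n, X_m) = θ(L₀, ⁅X_n, X_m⁆) = 0`. The remaining pairings
`θ(L_n, L_{-n})` are killed by `θ(⁅L_n, L_n⁆, L_{-2n}) = -3n θ(L_n, L_{-n})` and
`θ(L₀, L₀) = -θ(L₁, L₋₁) / 2`.
-/

/-- The coefficient `n(n+1)λ`, where `λ = ∞` (encoded by `none`) gives `n²`. -/
def lamTerm (lam : Option ℂ) (n : ℤ) : ℂ :=
  match lam with
  | some l => (n : ℂ) * ((n : ℂ) + 1) * l
  | none => (n : ℂ) ^ 2

/-- Structure constant for the bracket `[L_n, A_m]` in `W_A(λ)`. -/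
def omegaA (lam : Option ℂ) (n m : ℤ) : ℂ :=
  (n : ℂ) + (m : ℂ) + (if m = 0 then lamTerm lam n else 0)

/-- Structure constant for the bracket `[L_n, B_m]` in `W_B(λ)`. -/
def omegaB (lam : Option ℂ) (n m : ℤ) : ℂ :=
  (m : ℂ) - (if n + m = 0 then lamTerm lam n else 0)

lemma lamTerm_zero (lam : Option ℂ) : lamTerm lam 0 = 0 := by
  cases lam <;> simp [lamTerm]

lemma omegaA_zero_left (lam : Option ℂ) (m : ℤ) : omegaA lam 0 m = m := by
  by_cases hm : m = 0 <;> simp [omegaA, hm, lamTerm_zero]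

lemma omegaB_zero_left (lam : Option ℂ) (m : ℤ) : omegaB lam 0 m = m := by
  by_cases hm : m = 0 <;> simp [omegaB, hm, lamTerm_zero]

lemma neg_intCast_ne_intCast {K : Type*} [AddGroupWithOne K] [CharZero K] {n m : ℤ}
    (hnm : n + m ≠ 0) : -(n : K) ≠ m := by
  rwa [ne_eq, neg_eq_iff_add_eq_zero, ← Int.cast_add, Int.cast_eq_zero]

section InvariantForm

variable {K L : Type*} [Field K] [AddCommGroup L] [Module K L] [Bracket L L]
  {θ : L →ₗ[K] L →ₗ[K] K}

lemma mul_apply_eq_mul_apply_of_invariant (hinv : ∀ x y z : L, θ ⁅x, y⁆ z = θ x ⁅y, z⁆)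
    {x y z u w : L} {a c : K} (hxy : ⁅x, y⁆ = a • u) (hyz : ⁅y, z⁆ = c • w) :
    a * θ u z = c * θ x w := by
  simpa [hxy, hyz] using hinv x y z

lemma apply_eq_zero_of_weight_ne (hinv : ∀ x y z : L, θ ⁅x, y⁆ z = θ x ⁅y, z⁆)
    {h u v : L} {α β : K} (hu : ⁅u, h⁆ = α • u) (hv : ⁅h, v⁆ = β • v) (hαβ : α ≠ β) :
    θ u v = 0 := by
  have hθ := mul_apply_eq_mul_apply_of_invariant hinv hu hv
  exact (mul_eq_zero.mp (by linear_combination hθ : (α - β) * θ u v = 0)).resolve_left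
    (sub_ne_zero.mpr hαβ)

lemma apply_eq_zero_of_lie_eq_zero (hinv : ∀ x y z : L, θ ⁅x, y⁆ z = θ x ⁅y, z⁆)
    {h u v : L} {α : K} (hu : ⁅h, u⁆ = α • u) (hα : α ≠ 0) (huv : ⁅u, v⁆ = 0) :
    θ u v = 0 := by
  have hθ := hinv h u v
  rw [hu, huv] at hθ
  simpa [hα] using hθ

variable [CharZero K]

lemma apply_witt_eq_zero {e : ℤ → L} (he : ∀ n m : ℤ, ⁅e n, e m⁆ = ((m : K) - n) • e (n + m))
    (hinv : ∀ x y z : L, θ ⁅x, y⁆ z = θ x ⁅y, z⁆) (n m : ℤ) :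
    θ (e n) (e m) = 0 := by
  have off_antidiagonal : ∀ n m : ℤ, n + m ≠ 0 → θ (e n) (e m) = 0 := by
    intro n m hnm
    exact apply_eq_zero_of_weight_ne hinv (h := e 0) (by simpa using he n 0)
      (by simpa using he 0 m) (neg_intCast_ne_intCast hnm)
  have antidiagonal : ∀ n : ℤ, n ≠ 0 → θ (e n) (e (-n)) = 0 := by
    intro n hn
    have h := mul_apply_eq_mul_apply_of_invariant hinv (he n n) (he n (-2 * n))
    rw [show n + -2 * n = -n by ring] at h
    push_cast at h
    have hn' : (-3 * n : K) ≠ 0 := by simpa using hn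
    exact (mul_eq_zero.mp (by linear_combination -h)).resolve_left hn'
  have zero_zero : θ (e 0) (e 0) = 0 := by
    have h := mul_apply_eq_mul_apply_of_invariant hinv (he 0 1) (he 1 (-1))
    norm_num [antidiagonal 1 one_ne_zero] at h
    exact h
  obtain hnm | hnm := ne_or_eq (n + m) 0
  · exact off_antidiagonal n m hnm
  · obtain rfl : m = -n := by omega
    obtain hn | rfl := ne_or_eq n 0
    · simpa using antidiagonal n hn
    · simpa using zero_zero

lemma apply_witt_module_eq_zero {e x : ℤ → L} {ω : ℤ → ℤ → K} (hω : ∀ m : ℤ, ω 0 m = m)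
    (he : ∀ n m : ℤ, ⁅e n, e m⁆ = ((m : K) - n) • e (n + m))
    (hex : ∀ n m : ℤ, ⁅e n, x m⁆ = ω n m • x (n + m))
    (hinv : ∀ x y z : L, θ ⁅x, y⁆ z = θ x ⁅y, z⁆) {n m : ℤ} (hnm : n + m ≠ 0) :
    θ (e n) (x m) = 0 :=
  apply_eq_zero_of_weight_ne hinv (h := e 0) (by simpa using he n 0)
    (by simpa [hω] using hex 0 m) (neg_intCast_ne_intCast hnm)

lemma apply_abelian_eq_zero {e x : ℤ → L} {ω : ℤ → ℤ → K} (hω : ∀ m : ℤ, ω 0 m = m)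
    (hex : ∀ n m : ℤ, ⁅e n, x m⁆ = ω n m • x (n + m)) (hxx : ∀ n m : ℤ, ⁅x n, x m⁆ = 0)
    (hsymm : ∀ u v : L, θ u v = θ v u) (hinv : ∀ x y z : L, θ ⁅x, y⁆ z = θ x ⁅y, z⁆)
    {n m : ℤ} (hnm : ¬(n = 0 ∧ m = 0)) :
    θ (x n) (x m) = 0 := by
  have left_ne_zero : ∀ n m : ℤ, n ≠ 0 → θ (x n) (x m) = 0 := fun n m hn ↦
    apply_eq_zero_of_lie_eq_zero hinv (by simpa [hω] using hex 0 n) (by exact_mod_cast hn)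
      (hxx n m)
  obtain hn | rfl := ne_or_eq n 0
  · exact left_ne_zero n m hn
  · rw [hsymm]
    exact left_ne_zero m 0 (by tauto)

end InvariantForm

/-- any symmetric invariant bilinear form on `W_X(λ)` (for `X = A` or
`X = B`) vanishes on all pairs `(L_n, L_m)`, on all pairs `(L_n, X_m)` with `n + m ≠ 0`,
and on all pairs `(X_n, X_m)` with `(n, m) ≠ (0, 0)`. -/
theorem stmt_10 (lam : Option ℂ) (L : Type) [LieRing L] [LieAlgebra ℂ L]
    (b : Module.Basis (ℤ ⊕ ℤ) ℂ L) (ω : ℤ → ℤ → ℂ)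
    (hω : (∀ n m : ℤ, ω n m = omegaA lam n m) ∨ (∀ n m : ℤ, ω n m = omegaB lam n m))
    (hLL : ∀ n m : ℤ,
      ⁅b (Sum.inl n), b (Sum.inl m)⁆ = ((m : ℂ) - (n : ℂ)) • b (Sum.inl (n + m)))
    (hLX : ∀ n m : ℤ, ⁅b (Sum.inl n), b (Sum.inr m)⁆ = ω n m • b (Sum.inr (n + m)))
    (hXX : ∀ n m : ℤ, ⁅b (Sum.inr n), b (Sum.inr m)⁆ = 0)
    (θ : L →ₗ[ℂ] L →ₗ[ℂ] ℂ)
    (hsymm : ∀ x y : L, θ x y = θ y x)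
    (hinv : ∀ x y z : L, θ ⁅x, y⁆ z = θ x ⁅y, z⁆) :
    (∀ n m : ℤ, θ (b (Sum.inl n)) (b (Sum.inl m)) = 0) ∧
    (∀ n m : ℤ, n + m ≠ 0 → θ (b (Sum.inl n)) (b (Sum.inr m)) = 0) ∧
    (∀ n m : ℤ, ¬(n = 0 ∧ m = 0) → θ (b (Sum.inr n)) (b (Sum.inr m)) = 0) := by
  have hω0 : ∀ m : ℤ, ω 0 m = m := by
    rcases hω with h | h <;> simp [h, omegaA_zero_left, omegaB_zero_left]
  exact ⟨apply_witt_eq_zero (e := fun n ↦ b (Sum.inl n)) hLL hinv,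
    fun _ _ ↦ apply_witt_module_eq_zero (e := fun n ↦ b (Sum.inl n)) hω0 hLL hLX hinv,
    fun _ _ ↦ apply_abelian_eq_zero (x := fun n ↦ b (Sum.inr n)) hω0 hLX hXX hsymm hinv⟩
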